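/- Let p ≥ 3 be an integer and let G be a K_{1,p}-free graph. Then α(G) ≤ w(G) := max{k ∈ ℤ | Σ_{i=1}^k d_i + (1/2)Σ_{i=k+1}^n d_i − (n−k)(p−1)/2 ≤ m(G)}. -/

import Mathlib

open Finset

namespace DSI

variable {V : Type*} (G : SimpleGraph V) [Fintype V] [DecidableEq V] [DecidableRel G.Adj]

/-- The degree sequence of `G`, sorted in non-decreasing order. -/
def dseq : List ℕ := (Finset.univ.val.map (fun v => G.degree v)).sort (· ≤ ·)

/-- The sum of the `k` smallest degrees, `Σ_{i=1}^k d_i`. -/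
def sumSmallest (k : ℕ) : ℕ := ((dseq G).take k).sum

/-- The sum of the `k` largest degrees, `Σ_{i=1}^k d_{n-i+1}`. -/
def sumLargest (k : ℕ) : ℕ := ((dseq G).reverse.take k).sum

/-- The number of edges `m(G)`. -/
def esize : ℕ := G.edgeFinset.card

/-- `m[S]`: the number of edges of the subgraph induced by `S`. -/
def mOn (S : Finset V) : ℕ := (S.sym2.filter (fun e => e ∈ G.edgeSet)).card

/-- A set `I` is `j`-independent if every vertex of `I` has fewer than `j` neighbours in `I`,
i.e. the induced subgraph has maximum degree `< j`. -/
def JIndep (j : ℕ) (I : Finset V) : Prop := ∀ v ∈ I, (I.filter (G.Adj v)).card < j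

/-- The `j`-independence number `α_j(G)`. -/
noncomputable def alphaJ (j : ℕ) : ℕ := sSup {k | ∃ I : Finset V, JIndep G j I ∧ I.card = k}

/-- The family `F` of maximum `j`-independent sets. -/
noncomputable def maxJIndep (j : ℕ) : Set (Finset V) :=
  {S | JIndep G j S ∧ S.card = alphaJ G j}

/-- `max_{S ∈ F} (m[V−S] − m[S])`. -/
noncomputable def fU (j : ℕ) : ℤ :=
  sSup ((fun S : Finset V => (mOn G Sᶜ : ℤ) - (mOn G S : ℤ)) '' maxJIndep G j)

/-- `min_{S ∈ F} (m[V−S] − m[S])`. -/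
noncomputable def fL (j : ℕ) : ℤ :=
  sInf ((fun S : Finset V => (mOn G Sᶜ : ℤ) - (mOn G S : ℤ)) '' maxJIndep G j)

/-- The upper `j`-annihilation number `a_j(G)`. -/
noncomputable def aJ (j : ℕ) : ℕ :=
  sSup {k | k ≤ Fintype.card V ∧ (sumSmallest G k : ℤ) + fU G j ≤ (esize G : ℤ)}

/-- The lower `j`-annihilation number `c_j(G)`. -/
noncomputable def cJ (j : ℕ) : ℕ :=
  sInf {k | k ≤ Fintype.card V ∧ (esize G : ℤ) ≤ (sumLargest G k : ℤ) + fL G j}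

/-- The annihilation number `a(G)`. -/
noncomputable def annihilation : ℕ :=
  sSup {k | k ≤ Fintype.card V ∧ sumSmallest G k ≤ esize G}

/-- An independent set. -/
def IndepSet (I : Finset V) : Prop := ∀ v ∈ I, ∀ w ∈ I, ¬ G.Adj v w

/-- The independence number `α(G)`. -/
noncomputable def alpha : ℕ := sSup {k | ∃ I : Finset V, IndepSet G I ∧ I.card = k}

end DSI
/-- `G` is `K_{1,p}`-free: it has no induced star `K_{1,p}`, i.e. no vertex `v` together
with a set `s` of `p` pairwise non-adjacent neighbours of `v`. -/
def DSI.K1pFree {V : Type*} (G : SimpleGraph V) (p : ℕ) : Prop :=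
  ¬ ∃ (v : V) (s : Finset V), s.card = p ∧ v ∉ s ∧ (∀ w ∈ s, G.Adj v w) ∧
      ∀ w ∈ s, ∀ u ∈ s, ¬ G.Adj w u

/-- The index `w(G) = max { k | Σ_{i=1}^k d_i + (1/2) Σ_{i=k+1}^n d_i
    - (n-k)(p-1)/2 ≤ m(G) }`. -/
noncomputable def DSI.wIdx {V : Type*} (G : SimpleGraph V) [Fintype V]
    [DecidableEq V] [DecidableRel G.Adj] (p : ℕ) : ℕ :=
  sSup {k | k ≤ Fintype.card V ∧
    (DSI.sumSmallest G k : ℚ) + (1 / 2) * ((((DSI.dseq G).drop k).sum : ℕ) : ℚ)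
      - ((Fintype.card V : ℚ) - (k : ℚ)) * ((p : ℚ) - 1) / 2 ≤ (DSI.esize G : ℚ)}

/-! Let `I` be a maximum independent set. A vertex outside `I` has fewer than `p` neighbours
in `I`, since `p` of them would form an induced `K_{1,p}`. Counting the edges between `I` and its
complement therefore gives `d_1 + ⋯ + d_α ≤ Σ_{v ∈ I} d(v) ≤ (n - α)(p - 1)`, and together with
`Σ d_i = 2m` this is the inequality defining `w(G)` at `k = α`. -/

theorem List.sum_take_card_le_sum {α : Type*} [LinearOrder α] [AddCommMonoid α]
    [IsOrderedAddMonoid α] {l : List α} (hl : l.Pairwise (· ≤ ·)) {s : Multiset α}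
    (hs : s ≤ ↑l) : (l.take (Multiset.card s)).sum ≤ s.sum := by
  induction l generalizing s with
  | nil => simp [Multiset.le_zero.mp hs]
  | cons a l ih =>
    obtain ⟨ha_le, hl⟩ := List.pairwise_cons.mp hl
    cases hj : Multiset.card s with
    | zero => simp [Multiset.card_eq_zero.mp hj]
    | succ j =>
      rw [List.take_succ_cons, List.sum_cons]
      by_cases ha : a ∈ s
      · have hcard : Multiset.card (s.erase a) = j := by
          simp [Multiset.card_erase_of_mem ha, hj]
        calc a + (l.take j).sum ≤ a + (s.erase a).sum := by
              grw [← ih hl (Multiset.erase_le_iff_le_cons.mpr hs), hcard]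
          _ = s.sum := by rw [← Multiset.sum_cons, Multiset.cons_erase ha]
      · have hsl : s ≤ ↑l := (Multiset.le_cons_of_notMem ha).mp hs
        have hj_lt : j < l.length := by
          have := Multiset.card_le_card hsl
          rw [hj, Multiset.coe_card] at this
          omega
        calc a + (l.take j).sum ≤ l[j] + (l.take j).sum := by
              grw [ha_le _ (List.getElem_mem hj_lt)]
          _ = (l.take (j + 1)).sum := by rw [List.sum_take_succ _ _ hj_lt, add_comm]
          _ ≤ s.sum := hj ▸ ih hl hsl

namespace DSI

variable {V : Type*} (G : SimpleGraph V)

theorem coe_dseq [Fintype V] [DecidableRel G.Adj] :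
    ((dseq G : List ℕ) : Multiset ℕ) = univ.val.map fun v => G.degree v :=
  Multiset.sort_eq _ _

theorem sumSmallest_card_le_sum_degree [Fintype V] [DecidableRel G.Adj] (I : Finset V) :
    sumSmallest G #I ≤ ∑ v ∈ I, G.degree v := by
  have hle : (I.val.map fun v => G.degree v) ≤ ↑(dseq G) := by
    rw [coe_dseq]
    exact Multiset.map_le_map (val_le_iff.mpr I.subset_univ)
  have h := List.sum_take_card_le_sum (l := dseq G) (Multiset.pairwise_sort _ _) hle
  rwa [Multiset.card_map, card_val] at h

theorem sumSmallest_add_sum_drop [Fintype V] [DecidableRel G.Adj] (k : ℕ) :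
    sumSmallest G k + ((dseq G).drop k).sum = 2 * esize G := by
  rw [sumSmallest, ← List.sum_append, List.take_append_drop, esize,
    ← G.sum_degrees_eq_twice_card_edges, ← Multiset.sum_coe, coe_dseq]
  rfl

-- `h` says `d_1 + ⋯ + d_k ≤ (n - k)(p - 1)`, rearranged so that no truncated `p - 1` occurs.
theorem le_wIdx [Fintype V] [DecidableEq V] [DecidableRel G.Adj] {p k : ℕ}
    (hk : k ≤ Fintype.card V)
    (h : sumSmallest G k + (Fintype.card V - k) ≤ (Fintype.card V - k) * p) :
    k ≤ wIdx G p := by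
  refine le_csSup ⟨Fintype.card V, fun _ hx => hx.1⟩ ⟨hk, ?_⟩
  have htotal : (sumSmallest G k : ℚ) + ((dseq G).drop k).sum = 2 * esize G := by
    exact_mod_cast sumSmallest_add_sum_drop G k
  have hbound : (sumSmallest G k : ℚ) + (Fintype.card V - k) ≤ (Fintype.card V - k) * p := by
    exact_mod_cast h
  linarith

theorem exists_indepSet_card_eq_alpha [Fintype V] : ∃ I, IndepSet G I ∧ #I = alpha G :=
  Nat.sSup_mem (s := {k | ∃ I : Finset V, IndepSet G I ∧ #I = k}) ⟨0, ∅, by simp [IndepSet], rfl⟩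
    ⟨Fintype.card V, fun _ ⟨I, _, hI⟩ => hI ▸ I.card_le_univ⟩

variable {G}

theorem IndepSet.sum_degree_eq [Fintype V] [DecidableEq V] [DecidableRel G.Adj] {I : Finset V}
    (hI : IndepSet G I) : ∑ v ∈ I, G.degree v = ∑ u ∈ Iᶜ, #{w ∈ I | G.Adj u w} := by
  have hdeg : ∀ v ∈ I, G.degree v = #{u ∈ Iᶜ | G.Adj v u} := fun v hv => by
    rw [← G.card_neighborFinset_eq_degree, G.neighborFinset_eq_filter]
    congr 1
    ext u
    simp only [mem_filter, mem_univ, true_and, mem_compl]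
    exact ⟨fun hvu => ⟨fun hu => hI v hv u hu hvu, hvu⟩, And.right⟩
  simp only [sum_congr rfl hdeg, card_filter]
  rw [sum_comm]
  simp [G.adj_comm]

theorem K1pFree.card_filter_adj_lt [DecidableRel G.Adj] {p : ℕ} (hfree : K1pFree G p)
    {I : Finset V} (hI : IndepSet G I) {u : V} (hu : u ∉ I) : #{w ∈ I | G.Adj u w} < p := by
  by_contra! hp
  obtain ⟨s, hs, rfl⟩ := exists_subset_card_eq hp
  refine hfree ⟨u, s, rfl, fun hus => hu (mem_filter.mp (hs hus)).1,
    fun w hw => (mem_filter.mp (hs hw)).2, fun w hw v hv => ?_⟩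
  exact hI w (mem_filter.mp (hs hw)).1 v (mem_filter.mp (hs hv)).1

end DSI

theorem alpha_le_wIdx_general {V : Type*} (G : SimpleGraph V) [Fintype V]
    [DecidableEq V] [DecidableRel G.Adj] (p : ℕ)
    (hfree : DSI.K1pFree G p) :
    DSI.alpha G ≤ DSI.wIdx G p := by
  obtain ⟨I, hI, hcard⟩ := DSI.exists_indepSet_card_eq_alpha G
  rw [← hcard]
  refine DSI.le_wIdx G I.card_le_univ ?_
  rw [← card_compl]
  calc DSI.sumSmallest G #I + #Iᶜ ≤ ∑ v ∈ I, G.degree v + #Iᶜ := by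
        grw [DSI.sumSmallest_card_le_sum_degree]
    _ = ∑ u ∈ Iᶜ, (#{w ∈ I | G.Adj u w} + 1) := by
        rw [hI.sum_degree_eq, sum_add_distrib, card_eq_sum_ones]
    _ ≤ ∑ _u ∈ Iᶜ, p := sum_le_sum fun u hu =>
        hfree.card_filter_adj_lt hI (mem_compl.mp hu)
    _ = #Iᶜ * p := by rw [sum_const, smul_eq_mul]

theorem alpha_le_wIdx {V : Type*} (G : SimpleGraph V) [Fintype V]
    [DecidableEq V] [DecidableRel G.Adj] (p : ℕ) (hp : 3 ≤ p)
    (hfree : DSI.K1pFree G p) :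
    DSI.alpha G ≤ DSI.wIdx G p :=
  alpha_le_wIdx_general G p hfree
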